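/- Discount-factor thresholds: there exist δ̲ and δ̄ with 0 ≤ δ̲ ≤ δ̄ ≤ 1 such that for every δ ∈ (0,1): (i) some optimal contract at δ has a knowledge sequence that is not identically 0 if and only if δ > δ̲; (ii) if δ < δ̄ then s̄*(δ) < 1, and if δ > δ̄ then s̄*(δ) = 1, where s̄*(δ) denotes the smallest maximizer of s ↦ δ·π(s) + w(s) on [0,1]. -/

import Mathlib

open Set Filter

/-- Principal's continuation value `Π_t(s,p) = Σ_{τ=t}^∞ δ^{τ−t}(π(s_τ) − p_τ)`. -/
noncomputable def PiVal (δ : ℝ) (π : ℝ → ℝ) (s p : ℕ → ℝ) (t : ℕ) : ℝ :=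
  ∑' k : ℕ, δ ^ k * (π (s (t + k)) - p (t + k))

/-- Expert's continuation value `W_t(s,p) = Σ_{τ=t}^∞ δ^{τ−t}(w(s_τ) + p_τ)`. -/
noncomputable def WVal (δ : ℝ) (w : ℝ → ℝ) (s p : ℕ → ℝ) (t : ℕ) : ℝ :=
  ∑' k : ℕ, δ ^ k * (w (s (t + k)) + p (t + k))

/-- A contract: `s` takes values in `[0,1]`, `s 0 = 0`, and `t ↦ δ^t·p_t` is summable. -/
def IsContract (δ : ℝ) (s p : ℕ → ℝ) : Prop :=
  (∀ t, s t ∈ Set.Icc (0 : ℝ) 1) ∧ s 0 = 0 ∧ Summable fun t => δ ^ t * p t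

/-- Implementability: feasibility (monotone `s`, nonnegative `p`) plus (P-IC) and (E-IC). -/
def Implementable (δ : ℝ) (π w : ℝ → ℝ) (s p : ℕ → ℝ) : Prop :=
  IsContract δ s p ∧ Monotone s ∧ (∀ t, 0 ≤ p t) ∧
  (∀ t, π (s t) / (1 - δ) ≤ PiVal δ π s p t) ∧
  (∀ t, w (s t) / (1 - δ) ≤ WVal δ w s p (t + 1))

/-- An optimal contract maximizes the principal's time-0 profit among implementable contracts. -/
def Optimal (δ : ℝ) (π w : ℝ → ℝ) (s p : ℕ → ℝ) : Prop :=
  Implementable δ π w s p ∧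
  ∀ s' p' : ℕ → ℝ, Implementable δ π w s' p' → PiVal δ π s' p' 0 ≤ PiVal δ π s p 0

/-- The set of maximizers of `x ↦ δ·π(x) + w(x)` on `[0,1]`. -/
def MaxSet (δ : ℝ) (π w : ℝ → ℝ) : Set ℝ :=
  {x | x ∈ Set.Icc (0 : ℝ) 1 ∧ ∀ y ∈ Set.Icc (0 : ℝ) 1, δ * π y + w y ≤ δ * π x + w x}

/-!
Write `u = π + w` and `S_t = Σ_k δ^k u(s_{t+k})` for the joint surplus, in which payments cancel.
Adding (P-IC) at `t + 1` and (E-IC) at `t` gives `w(s_t) - w(s_{t+1}) ≤ δ (S_{t+2} - S_{t+1})`.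
Telescoping, bounding `S_{t+1}` above by `u(L) / (1 - δ)` and `S_1` strictly below by
`u(0) / (1 - δ)`, and letting `t → ∞` shows that a nontrivial implementable contract with limit
knowledge `L` has `w(0) - w(L) < δ (π(L) - π(0))`. Conversely, from such an `x` the intermediate
value theorem yields a strictly increasing path below `x` along which
`δ π(s_{t+1}) + w(s_t) = δ π(x) + w(x)`; with payments that make (P-IC) bind, (E-IC) then binds too.
Optimal contracts exist by compactness, since (P-IC) bounds the payments, and a trivial optimum is
worth `π(0) / (1 - δ)` at most, which the nontrivial contract attains. Hence `δ̲` is the infimum of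
`(w(0) - w(x)) / (π(x) - π(0))` over `x ∈ (0,1]`, and `δ̄` is the supremum of
`(w(y) - w(1)) / (π(1) - π(y))` over `y ∈ [0,1)`, above which `1` is the only maximizer of
`δ π + w`.
-/

open Topology

section DiscountedSum

variable {δ : ℝ}

lemma exists_abs_comp_le {g : ℝ → ℝ} (hg : ContinuousOn g (Icc 0 1)) {s : ℕ → ℝ}
    (hs : ∀ n, s n ∈ Icc (0 : ℝ) 1) : ∃ C, ∀ n, |g (s n)| ≤ C := by
  obtain ⟨C, hC⟩ := isCompact_Icc.exists_bound_of_continuousOn hg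
  exact ⟨C, fun n => hC _ (hs n)⟩

lemma summable_geom_mul_of_abs_le (hδ0 : 0 ≤ δ) (hδ1 : δ < 1) {f : ℕ → ℝ} {C : ℝ}
    (hf : ∀ k, |f k| ≤ C) : Summable fun k => δ ^ k * f k :=
  ((summable_geometric_of_lt_one hδ0 hδ1).mul_right C).of_norm_bounded fun k => by
    rw [Real.norm_eq_abs, abs_mul, abs_pow, abs_of_nonneg hδ0]
    exact mul_le_mul_of_nonneg_left (hf k) (pow_nonneg hδ0 k)

lemma summable_geom_mul_comp (hδ0 : 0 ≤ δ) (hδ1 : δ < 1) {g : ℝ → ℝ}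
    (hg : ContinuousOn g (Icc 0 1)) {s : ℕ → ℝ} (hs : ∀ n, s n ∈ Icc (0 : ℝ) 1) :
    Summable fun k => δ ^ k * g (s k) :=
  let ⟨_, hC⟩ := exists_abs_comp_le hg hs
  summable_geom_mul_of_abs_le hδ0 hδ1 hC

lemma summable_geom_mul_shift (hδ : δ ≠ 0) {f : ℕ → ℝ} (hf : Summable fun k => δ ^ k * f k)
    (t : ℕ) : Summable fun k => δ ^ k * f (t + k) := by
  refine (((summable_nat_add_iff t).2 hf).mul_left (δ ^ t)⁻¹).congr fun k => ?_
  rw [pow_add, add_comm k t]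
  field_simp

lemma tsum_geom_mul_shift_eq {f : ℕ → ℝ} {t : ℕ} (hf : Summable fun k => δ ^ k * f (t + k)) :
    ∑' k, δ ^ k * f (t + k) = f t + δ * ∑' k, δ ^ k * f (t + 1 + k) := by
  rw [hf.tsum_eq_zero_add, ← tsum_mul_left]
  simp only [pow_zero, one_mul, add_zero, pow_succ]
  congr 1
  exact tsum_congr fun k => by rw [add_right_comm, add_assoc]; ring

lemma tsum_geom_mul_const (hδ0 : 0 ≤ δ) (hδ1 : δ < 1) (c : ℝ) :
    ∑' k : ℕ, δ ^ k * c = c / (1 - δ) := by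
  rw [tsum_mul_right, tsum_geometric_of_lt_one hδ0 hδ1, div_eq_inv_mul]

lemma tsum_geom_mul_eq_of_eq_add (hδ0 : 0 ≤ δ) (hδ1 : δ < 1) {a X : ℕ → ℝ} {C : ℝ}
    (hX : ∀ n, |X n| ≤ C) (hrec : ∀ n, X n = a n + δ * X (n + 1)) (t : ℕ) :
    ∑' k, δ ^ k * a (t + k) = X t := by
  have hpartial : ∀ K, ∑ k ∈ Finset.range K, δ ^ k * a (t + k) = X t - δ ^ K * X (t + K) := by
    intro K
    induction K with
    | zero => simp
    | succ K ih =>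
      rw [Finset.sum_range_succ, ih, hrec (t + K), pow_succ, ← add_assoc]
      ring
  have ha : ∀ n, |a n| ≤ C + C := fun n => by
    rw [show a n = X n - δ * X (n + 1) by linarith [hrec n], abs_sub_comm]
    refine (abs_sub _ _).trans (add_le_add ?_ (hX n))
    rw [abs_mul, abs_of_nonneg hδ0]
    nlinarith [hX (n + 1), abs_nonneg (X (n + 1))]
  refine ((summable_geom_mul_of_abs_le hδ0 hδ1 fun k => ha (t + k)).hasSum_iff_tendsto_nat.2
    ?_).tsum_eq
  simp only [hpartial]
  have htail : Tendsto (fun K => δ ^ K * X (t + K)) atTop (𝓝 0) := by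
    refine squeeze_zero_norm (fun K => ?_)
      (by simpa using (tendsto_pow_atTop_nhds_zero_of_lt_one hδ0 hδ1).mul_const C)
    rw [Real.norm_eq_abs, abs_mul, abs_pow, abs_of_nonneg hδ0]
    exact mul_le_mul_of_nonneg_left (hX _) (pow_nonneg hδ0 _)
  simpa using tendsto_const_nhds.sub htail

lemma continuous_tsum_geom_mul_comp {Y : Type*} [TopologicalSpace Y] [CompactSpace Y]
    (hδ0 : 0 ≤ δ) (hδ1 : δ < 1) {φ : Y → ℝ} (hφ : Continuous φ) (t : ℕ) :
    Continuous fun x : ℕ → Y => ∑' k, δ ^ k * φ (x (t + k)) := by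
  obtain ⟨C, hC⟩ := isCompact_univ.exists_bound_of_continuousOn hφ.continuousOn
  refine continuous_tsum (fun k => continuous_const.mul (hφ.comp (continuous_apply _)))
    ((summable_geometric_of_lt_one hδ0 hδ1).mul_right C) fun k x => ?_
  rw [norm_mul, norm_pow, Real.norm_eq_abs, abs_of_nonneg hδ0]
  exact mul_le_mul_of_nonneg_left (hC _ (mem_univ _)) (pow_nonneg hδ0 _)

end DiscountedSum

section Ratios

variable {δ : ℝ}

lemma bddAbove_image_div {ι : Type*} {A : Set ι} {f g : ι → ℝ} (hfg : ∀ x ∈ A, f x ≤ g x)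
    (hg : ∀ x ∈ A, 0 < g x) : BddAbove ((fun x => f x / g x) '' A) :=
  ⟨1, forall_mem_image.2 fun x hx => (div_le_one (hg x hx)).2 (hfg x hx)⟩

lemma csInf_image_div_lt_iff {ι : Type*} {A : Set ι} {f g : ι → ℝ} (hA : A.Nonempty)
    (hf : ∀ x ∈ A, 0 ≤ f x) (hg : ∀ x ∈ A, 0 < g x) :
    sInf ((fun x => f x / g x) '' A) < δ ↔ ∃ x ∈ A, f x < δ * g x := by
  rw [csInf_lt_iff ⟨0, forall_mem_image.2 fun x hx => div_nonneg (hf x hx) (hg x hx).le⟩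
    (hA.image _), exists_mem_image]
  exact exists_congr fun x => and_congr_right fun hx => div_lt_iff₀ (hg x hx)

lemma lt_csSup_image_div_iff {ι : Type*} {A : Set ι} {f g : ι → ℝ} (hA : A.Nonempty)
    (hfg : ∀ x ∈ A, f x ≤ g x) (hg : ∀ x ∈ A, 0 < g x) :
    δ < sSup ((fun x => f x / g x) '' A) ↔ ∃ x ∈ A, δ * g x < f x := by
  rw [lt_csSup_iff (bddAbove_image_div hfg hg) (hA.image _), exists_mem_image]
  exact exists_congr fun x => and_congr_right fun hx => lt_div_iff₀ (hg x hx)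

lemma lt_mul_of_csSup_image_div_lt {ι : Type*} {A : Set ι} {f g : ι → ℝ}
    (hfg : ∀ x ∈ A, f x ≤ g x) (hg : ∀ x ∈ A, 0 < g x)
    (h : sSup ((fun x => f x / g x) '' A) < δ) {x : ι} (hx : x ∈ A) : f x < δ * g x :=
  (div_lt_iff₀ (hg x hx)).1 <|
    (le_csSup (bddAbove_image_div hfg hg) (mem_image_of_mem _ hx)).trans_lt h

end Ratios

section Values

variable {δ : ℝ} {π w : ℝ → ℝ} {s p : ℕ → ℝ}

noncomputable def SurplusVal (δ : ℝ) (π w : ℝ → ℝ) (s : ℕ → ℝ) (t : ℕ) : ℝ :=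
  ∑' k : ℕ, δ ^ k * (π (s (t + k)) + w (s (t + k)))

lemma IsContract.summable_piVal (hδ0 : 0 < δ) (hδ1 : δ < 1) (hπ : ContinuousOn π (Icc 0 1))
    (h : IsContract δ s p) (t : ℕ) :
    Summable fun k => δ ^ k * (π (s (t + k)) - p (t + k)) := by
  refine summable_geom_mul_shift (f := fun n => π (s n) - p n) hδ0.ne' ?_ t
  exact ((summable_geom_mul_comp hδ0.le hδ1 hπ h.1).sub h.2.2).congr fun k => by ring

lemma IsContract.summable_wVal (hδ0 : 0 < δ) (hδ1 : δ < 1) (hw : ContinuousOn w (Icc 0 1))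
    (h : IsContract δ s p) (t : ℕ) :
    Summable fun k => δ ^ k * (w (s (t + k)) + p (t + k)) := by
  refine summable_geom_mul_shift (f := fun n => w (s n) + p n) hδ0.ne' ?_ t
  exact ((summable_geom_mul_comp hδ0.le hδ1 hw h.1).add h.2.2).congr fun k => by ring

lemma IsContract.piVal_add_wVal (hδ0 : 0 < δ) (hδ1 : δ < 1) (hπ : ContinuousOn π (Icc 0 1))
    (hw : ContinuousOn w (Icc 0 1)) (h : IsContract δ s p) (t : ℕ) :
    PiVal δ π s p t + WVal δ w s p t = SurplusVal δ π w s t := by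
  rw [PiVal, WVal, SurplusVal,
    ← (h.summable_piVal hδ0 hδ1 hπ t).tsum_add (h.summable_wVal hδ0 hδ1 hw t)]
  exact tsum_congr fun k => by ring

lemma surplusVal_eq_add (hδ0 : 0 < δ) (hδ1 : δ < 1) (hπ : ContinuousOn π (Icc 0 1))
    (hw : ContinuousOn w (Icc 0 1)) (hs : ∀ n, s n ∈ Icc (0 : ℝ) 1) (t : ℕ) :
    SurplusVal δ π w s t = π (s t) + w (s t) + δ * SurplusVal δ π w s (t + 1) :=
  tsum_geom_mul_shift_eq (f := fun n => π (s n) + w (s n)) <|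
    summable_geom_mul_shift hδ0.ne'
      (summable_geom_mul_comp hδ0.le hδ1 (hπ.add hw) hs) t

lemma surplusVal_le (hδ0 : 0 < δ) (hδ1 : δ < 1) (hπ : ContinuousOn π (Icc 0 1))
    (hw : ContinuousOn w (Icc 0 1)) (hu : MonotoneOn (fun x => π x + w x) (Icc 0 1))
    (hs : ∀ n, s n ∈ Icc (0 : ℝ) 1) {x : ℝ} (hx : x ∈ Icc (0 : ℝ) 1) (hsx : ∀ n, s n ≤ x)
    (t : ℕ) : SurplusVal δ π w s t ≤ (π x + w x) / (1 - δ) := by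
  rw [← tsum_geom_mul_const hδ0.le hδ1]
  refine Summable.tsum_le_tsum (fun k => ?_)
    (summable_geom_mul_shift hδ0.ne' (summable_geom_mul_comp hδ0.le hδ1 (hπ.add hw) hs) t)
    (summable_geom_mul_of_abs_le hδ0.le hδ1 fun _ => le_rfl)
  exact mul_le_mul_of_nonneg_left (hu (hs _) hx (hsx _)) (pow_nonneg hδ0.le k)

lemma surplusVal_gt (hδ0 : 0 < δ) (hδ1 : δ < 1) (hπ : ContinuousOn π (Icc 0 1))
    (hw : ContinuousOn w (Icc 0 1)) (hu : StrictMonoOn (fun x => π x + w x) (Icc 0 1))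
    (hs : ∀ n, s n ∈ Icc (0 : ℝ) 1) {t n : ℕ} (hn : 0 < s (t + n)) :
    (π 0 + w 0) / (1 - δ) < SurplusVal δ π w s t := by
  have h0 : (0 : ℝ) ∈ Icc (0 : ℝ) 1 := left_mem_Icc.2 zero_le_one
  rw [← tsum_geom_mul_const hδ0.le hδ1]
  refine Summable.tsum_lt_tsum (i := n) (fun k => ?_) ?_
    (summable_geom_mul_of_abs_le hδ0.le hδ1 fun _ => le_rfl)
    (summable_geom_mul_shift hδ0.ne' (summable_geom_mul_comp hδ0.le hδ1 (hπ.add hw) hs) t)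
  · exact mul_le_mul_of_nonneg_left (hu.monotoneOn h0 (hs _) (hs _).1) (pow_nonneg hδ0.le k)
  · exact mul_lt_mul_of_pos_left (hu h0 (hs _) hn) (pow_pos hδ0 n)

end Values

section Necessity

variable {δ : ℝ} {π w : ℝ → ℝ} {s p : ℕ → ℝ}

/-- The sum of (P-IC) at `t + 1` and (E-IC) at `t`. -/
lemma Implementable.w_sub_w_succ_le (hδ0 : 0 < δ) (hδ1 : δ < 1)
    (hπ : ContinuousOn π (Icc 0 1)) (hw : ContinuousOn w (Icc 0 1))
    (h : Implementable δ π w s p) (t : ℕ) :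
    w (s t) - w (s (t + 1)) ≤
      δ * (SurplusVal δ π w s (t + 2) - SurplusVal δ π w s (t + 1)) := by
  have h1δ : 0 < 1 - δ := sub_pos.2 hδ1
  have hP := (div_le_iff₀ h1δ).1 (h.2.2.2.1 (t + 1))
  have hE := (div_le_iff₀ h1δ).1 (h.2.2.2.2 t)
  have hsum := h.1.piVal_add_wVal hδ0 hδ1 hπ hw (t + 1)
  have hrec := surplusVal_eq_add hδ0 hδ1 hπ hw h.1.1 (t + 1)
  linear_combination hP + hE + (1 - δ) * hsum + hrec

lemma Implementable.w_sub_le (hδ0 : 0 < δ) (hδ1 : δ < 1)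
    (hπ : ContinuousOn π (Icc 0 1)) (hw : ContinuousOn w (Icc 0 1))
    (h : Implementable δ π w s p) (T : ℕ) :
    w (s 0) - w (s T) ≤ δ * (SurplusVal δ π w s (T + 1) - SurplusVal δ π w s 1) := by
  induction T with
  | zero => simp
  | succ T ih => linarith [h.w_sub_w_succ_le hδ0 hδ1 hπ hw T]

lemma Implementable.exists_gain (hδ0 : 0 < δ) (hδ1 : δ < 1)
    (hπ : ContinuousOn π (Icc 0 1)) (hw : ContinuousOn w (Icc 0 1))
    (hu : StrictMonoOn (fun x => π x + w x) (Icc 0 1))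
    (h : Implementable δ π w s p) (hne : ∃ t, s t ≠ 0) :
    ∃ x ∈ Ioc (0 : ℝ) 1, w 0 - w x < δ * (π x - π 0) := by
  have hs := h.1.1
  have hs0 := h.1.2.1
  obtain ⟨t, ht⟩ := hne
  have hbdd : BddAbove (range s) := ⟨1, forall_mem_range.2 fun n => (hs n).2⟩
  set L := ⨆ n, s n
  have hsL : ∀ n, s n ≤ L := le_ciSup hbdd
  have hL : L ∈ Ioc (0 : ℝ) 1 :=
    ⟨((hs t).1.lt_of_ne' ht).trans_le (hsL t), ciSup_le fun n => (hs n).2⟩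
  have hLmem : L ∈ Icc (0 : ℝ) 1 := Ioc_subset_Icc_self hL
  have hupper := surplusVal_le hδ0 hδ1 hπ hw hu.monotoneOn hs hLmem hsL
  have hlower : (π 0 + w 0) / (1 - δ) < SurplusVal δ π w s 1 := by
    refine surplusVal_gt hδ0 hδ1 hπ hw hu hs (n := t - 1) ?_
    have ht1 : 1 ≤ t := Nat.one_le_iff_ne_zero.2 fun h0 => ht (h0 ▸ hs0)
    rw [Nat.add_sub_cancel' ht1]
    exact (hs t).1.lt_of_ne' ht
  have hlim : Tendsto (fun T => w (s 0) - w (s T)) atTop (𝓝 (w 0 - w L)) := by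
    refine hs0 ▸ tendsto_const_nhds.sub ((hw L hLmem).tendsto.comp ?_)
    exact tendsto_nhdsWithin_iff.2
      ⟨tendsto_atTop_ciSup h.2.1 hbdd, Eventually.of_forall hs⟩
  have hloss : w 0 - w L ≤ δ * ((π L + w L) / (1 - δ) - SurplusVal δ π w s 1) :=
    le_of_tendsto' hlim fun T => (h.w_sub_le hδ0 hδ1 hπ hw T).trans <|
      mul_le_mul_of_nonneg_left (by linarith [hupper (T + 1)]) hδ0.le
  have hgain : (1 - δ) * (w 0 - w L) < δ * (π L + w L - (π 0 + w 0)) := by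
    rw [← lt_div_iff₀' (sub_pos.2 hδ1), mul_div_assoc, sub_div]
    exact hloss.trans_lt (mul_lt_mul_of_pos_left (by linarith) hδ0)
  exact ⟨L, hL, by linarith⟩

end Necessity

section Sufficiency

variable {δ : ℝ} {π w : ℝ → ℝ}

/-- The payments that make (P-IC) bind at every date. -/
noncomputable def bindingPay (δ : ℝ) (π : ℝ → ℝ) (s : ℕ → ℝ) (t : ℕ) : ℝ :=
  δ * (π (s (t + 1)) - π (s t)) / (1 - δ)

lemma piVal_bindingPay (hδ0 : 0 < δ) (hδ1 : δ < 1) (hπ : ContinuousOn π (Icc 0 1))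
    {s : ℕ → ℝ} (hs : ∀ n, s n ∈ Icc (0 : ℝ) 1) (t : ℕ) :
    PiVal δ π s (bindingPay δ π s) t = π (s t) / (1 - δ) := by
  obtain ⟨C, hC⟩ := exists_abs_comp_le (hπ.div_const (1 - δ)) hs
  refine tsum_geom_mul_eq_of_eq_add (a := fun n => π (s n) - bindingPay δ π s n)
    hδ0.le hδ1 hC (fun n => ?_) t
  have : 1 - δ ≠ 0 := (sub_pos.2 hδ1).ne'
  simp only [bindingPay]
  field_simp
  ring

lemma wVal_bindingPay (hδ0 : 0 < δ) (hδ1 : δ < 1) (hπ : ContinuousOn π (Icc 0 1))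
    {s : ℕ → ℝ} (hs : ∀ n, s n ∈ Icc (0 : ℝ) 1) {c : ℝ}
    (hc : ∀ n, δ * π (s (n + 1)) + w (s n) = c) (t : ℕ) :
    WVal δ w s (bindingPay δ π s) (t + 1) = w (s t) / (1 - δ) := by
  obtain ⟨C, hC⟩ := exists_abs_comp_le (g := fun y => (c - δ * π y) / (1 - δ))
    ((continuousOn_const.sub (continuousOn_const.mul hπ)).div_const _) hs
  have hW := tsum_geom_mul_eq_of_eq_add (a := fun n => w (s n) + bindingPay δ π s n)
    hδ0.le hδ1 hC (fun n => ?_) (t + 1)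
  · rw [WVal, hW, ← hc t]
    ring
  have : 1 - δ ≠ 0 := (sub_pos.2 hδ1).ne'
  simp only [bindingPay, ← hc n]
  field_simp
  ring

lemma implementable_bindingPay (hδ0 : 0 < δ) (hδ1 : δ < 1) (hπ : ContinuousOn π (Icc 0 1))
    (hπm : MonotoneOn π (Icc 0 1)) {s : ℕ → ℝ} (hs : ∀ n, s n ∈ Icc (0 : ℝ) 1) (hs0 : s 0 = 0)
    (hmono : Monotone s) {c : ℝ} (hc : ∀ n, δ * π (s (n + 1)) + w (s n) = c) :
    Implementable δ π w s (bindingPay δ π s) := by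
  have hsum : Summable fun t => δ ^ t * bindingPay δ π s t := by
    have h := summable_geom_mul_comp hδ0.le hδ1 hπ hs
    refine (((summable_geom_mul_shift hδ0.ne' h 1).sub h).mul_left (δ / (1 - δ))).congr
      fun t => ?_
    rw [bindingPay, add_comm 1 t]
    ring
  refine ⟨⟨hs, hs0, hsum⟩, hmono, fun t => ?_, fun t => (piVal_bindingPay hδ0 hδ1 hπ hs t).ge,
    fun t => (wVal_bindingPay hδ0 hδ1 hπ hs hc t).ge⟩
  exact div_nonneg (mul_nonneg hδ0.le (sub_nonneg.2 (hπm (hs t) (hs _) (hmono t.le_succ))))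
    (sub_pos.2 hδ1).le

/-- Each step is found by the intermediate value theorem; `δ π(y') + w(y) = c` with `y < y'`
forces `δ π(y') + w(y') < c`, so the path never reaches `x`. -/
lemma exists_strictMono_path (hδ0 : 0 < δ) (hπ : ContinuousOn π (Icc 0 1))
    (hw : StrictAntiOn w (Icc 0 1)) {x : ℝ} (hx : x ∈ Icc (0 : ℝ) 1)
    (hgain : δ * π 0 + w 0 < δ * π x + w x) :
    ∃ s : ℕ → ℝ, s 0 = 0 ∧ StrictMono s ∧ (∀ n, s n ∈ Icc (0 : ℝ) 1) ∧
      ∀ n, δ * π (s (n + 1)) + w (s n) = δ * π x + w x := by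
  set c := δ * π x + w x
  have step : ∀ y ∈ Icc 0 x, δ * π y + w y < c →
      ∃ y' ∈ Ioc y x, δ * π y' + w y = c ∧ δ * π y' + w y' < c := by
    intro y hy hyc
    have hy1 : y ∈ Icc (0 : ℝ) 1 := ⟨hy.1, hy.2.trans hx.2⟩
    have hlevel : (c - w y) / δ ∈ Ioc (π y) (π x) := by
      rw [mem_Ioc, lt_div_iff₀ hδ0, div_le_iff₀ hδ0]
      have := hw.antitoneOn hy1 hx hy.2
      constructor <;> linarith
    obtain ⟨y', hy', hπy'⟩ :=
      intermediate_value_Ioc hy.2 (hπ.mono (Icc_subset_Icc hy.1 hx.2)) hlevel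
    have hwy' := hw hy1 ⟨hy1.1.trans hy'.1.le, hy'.2.trans hx.2⟩ hy'.1
    have hc : δ * π y' + w y = c := by
      rw [hπy', mul_div_cancel₀ _ hδ0.ne']
      ring
    exact ⟨y', hy', hc, by linarith⟩
  choose! f hf using step
  have hinv : ∀ n, f^[n] 0 ∈ Icc 0 x ∧ δ * π (f^[n] 0) + w (f^[n] 0) < c := by
    intro n
    induction n with
    | zero => exact ⟨left_mem_Icc.2 hx.1, hgain⟩
    | succ n ih =>
      obtain ⟨hy', -, hlt⟩ := hf _ ih.1 ih.2
      rw [Function.iterate_succ_apply']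
      exact ⟨⟨ih.1.1.trans hy'.1.le, hy'.2⟩, hlt⟩
  refine ⟨fun n => f^[n] 0, rfl, strictMono_nat_of_lt_succ fun n => ?_,
    fun n => ⟨(hinv n).1.1, (hinv n).1.2.trans hx.2⟩, fun n => ?_⟩
  · rw [Function.iterate_succ_apply']
    exact (hf _ (hinv n).1 (hinv n).2).1.1
  · simp only [Function.iterate_succ_apply']
    exact (hf _ (hinv n).1 (hinv n).2).2.1

lemma exists_implementable_ne_zero (hδ0 : 0 < δ) (hδ1 : δ < 1)
    (hπ : ContinuousOn π (Icc 0 1)) (hπm : MonotoneOn π (Icc 0 1))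
    (hw : StrictAntiOn w (Icc 0 1)) {x : ℝ} (hx : x ∈ Ioc (0 : ℝ) 1)
    (hgain : w 0 - w x < δ * (π x - π 0)) :
    ∃ s p : ℕ → ℝ, Implementable δ π w s p ∧ ∃ t, s t ≠ 0 := by
  obtain ⟨s, hs0, hsm, hs, hc⟩ :=
    exists_strictMono_path hδ0 hπ hw (Ioc_subset_Icc_self hx) (by linarith)
  exact ⟨s, bindingPay δ π s, implementable_bindingPay hδ0 hδ1 hπ hπm hs hs0 hsm.monotone hc,
    1, (hs0 ▸ hsm zero_lt_one).ne'⟩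

end Sufficiency

section Existence

variable {δ : ℝ} {π w : ℝ → ℝ}

lemma implementable_zero (hδ0 : 0 ≤ δ) (hδ1 : δ < 1) :
    Implementable δ π w (fun _ => 0) (fun _ => 0) := by
  refine ⟨⟨fun _ => left_mem_Icc.2 zero_le_one, rfl, by simp⟩,
    monotone_const, fun _ => le_rfl, fun t => ?_, fun t => ?_⟩
  · simp only [PiVal, sub_zero, tsum_geom_mul_const hδ0 hδ1, le_rfl]
  · simp only [WVal, add_zero, tsum_geom_mul_const hδ0 hδ1, le_rfl]

/-- (P-IC) caps each payment: the principal could stop paying and keep the current knowledge. -/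
lemma exists_pay_bound (hδ0 : 0 < δ) (hδ1 : δ < 1) (hπ : ContinuousOn π (Icc 0 1)) :
    ∃ K, 0 ≤ K ∧ ∀ s p, Implementable δ π w s p → ∀ t, p t ≤ K := by
  obtain ⟨C, hC⟩ := isCompact_Icc.exists_bound_of_continuousOn hπ
  have hC' : ∀ x ∈ Icc (0 : ℝ) 1, |π x| ≤ C := hC
  have hC0 : 0 ≤ C := (abs_nonneg _).trans (hC' 0 (left_mem_Icc.2 zero_le_one))
  have h1δ := sub_pos.2 hδ1
  refine ⟨2 * C / (1 - δ), by positivity, fun s p h t => ?_⟩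
  have hsum := h.1.summable_piVal hδ0 hδ1 hπ
  have hrec : PiVal δ π s p t = π (s t) - p t + δ * PiVal δ π s p (t + 1) :=
    tsum_geom_mul_shift_eq (f := fun n => π (s n) - p n) (hsum t)
  have htail : PiVal δ π s p (t + 1) ≤ C / (1 - δ) := by
    rw [← tsum_geom_mul_const hδ0.le hδ1]
    refine Summable.tsum_le_tsum (fun k => mul_le_mul_of_nonneg_left ?_ (pow_nonneg hδ0.le k))
      (hsum (t + 1)) (summable_geom_mul_of_abs_le hδ0.le hδ1 fun _ => le_rfl)
    linarith [h.2.2.1 (t + 1 + k), le_abs_self (π (s (t + 1 + k))), hC' _ (h.1.1 (t + 1 + k))]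
  have hP := (div_le_iff₀ h1δ).1 (h.2.2.2.1 t)
  have hlow : -C ≤ π (s t) := neg_le_of_abs_le (hC' _ (h.1.1 t))
  rw [le_div_iff₀ h1δ]
  nlinarith [mul_le_mul_of_nonneg_left htail (mul_nonneg hδ0.le h1δ.le),
    mul_le_mul_of_nonneg_left hlow hδ0.le, div_mul_cancel₀ C h1δ.ne']

lemma implementable_iff_of_bounded (hδ0 : 0 ≤ δ) (hδ1 : δ < 1) {s p : ℕ → ℝ} {K : ℝ}
    (hs : ∀ t, s t ∈ Icc (0 : ℝ) 1) (hp : ∀ t, p t ∈ Icc 0 K) :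
    Implementable δ π w s p ↔ s 0 = 0 ∧ Monotone s ∧
      (∀ t, π (s t) / (1 - δ) ≤ PiVal δ π s p t) ∧
      ∀ t, w (s t) / (1 - δ) ≤ WVal δ w s p (t + 1) := by
  have hsum : Summable fun t => δ ^ t * p t :=
    summable_geom_mul_of_abs_le hδ0 hδ1 fun t =>
      abs_le.2 ⟨by linarith [(hp t).1, (hp t).2], (hp t).2⟩
  exact ⟨fun ⟨⟨_, h0, _⟩, hm, _, hP, hE⟩ => ⟨h0, hm, hP, hE⟩,
    fun ⟨h0, hm, hP, hE⟩ => ⟨⟨hs, h0, hsum⟩, hm, fun t => (hp t).1, hP, hE⟩⟩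

/-- Payments are bounded, so implementable contracts form a closed subset of the compact space
`ℕ → [0,1] × [0,K]`, on which the principal's value is continuous. -/
lemma exists_optimal (hδ0 : 0 < δ) (hδ1 : δ < 1) (hπ : ContinuousOn π (Icc 0 1))
    (hw : ContinuousOn w (Icc 0 1)) : ∃ s p, Optimal δ π w s p := by
  obtain ⟨K, hK0, hK⟩ := exists_pay_bound (w := w) hδ0 hδ1 hπ
  let sOf : (ℕ → Icc (0 : ℝ) 1 × Icc (0 : ℝ) K) → ℕ → ℝ := fun x t => (x t).1
  let pOf : (ℕ → Icc (0 : ℝ) 1 × Icc (0 : ℝ) K) → ℕ → ℝ := fun x t => (x t).2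
  have hs : Continuous fun y : Icc (0 : ℝ) 1 × Icc (0 : ℝ) K => (y.1 : ℝ) :=
    continuous_subtype_val.comp continuous_fst
  have hp : Continuous fun y : Icc (0 : ℝ) 1 × Icc (0 : ℝ) K => (y.2 : ℝ) :=
    continuous_subtype_val.comp continuous_snd
  have hπs := hπ.comp_continuous hs fun y => y.1.2
  have hws := hw.comp_continuous hs fun y => y.1.2
  have hΓ : {x | Implementable δ π w (sOf x) (pOf x)} =
      {x | sOf x 0 = 0} ∩ {x | Monotone (sOf x)} ∩
        (⋂ t, {x | π (sOf x t) / (1 - δ) ≤ PiVal δ π (sOf x) (pOf x) t}) ∩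
        ⋂ t, {x | w (sOf x t) / (1 - δ) ≤ WVal δ w (sOf x) (pOf x) (t + 1)} := by
    ext x
    simp only [mem_inter_iff, mem_iInter, mem_ofPred_eq, and_assoc]
    exact implementable_iff_of_bounded hδ0.le hδ1 (fun t => (x t).1.2) (fun t => (x t).2.2)
  have hPi := continuous_tsum_geom_mul_comp hδ0.le hδ1 (hπs.sub hp)
  have hW := continuous_tsum_geom_mul_comp hδ0.le hδ1 (hws.add hp)
  have hclosed : IsClosed {x | Implementable δ π w (sOf x) (pOf x)} := by
    rw [hΓ]
    refine ((isClosed_eq (hs.comp (continuous_apply 0)) continuous_const).inter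
      (isClosed_monotone.preimage (continuous_pi fun t => hs.comp (continuous_apply t)))).inter
      (isClosed_iInter fun t => isClosed_le ((hπs.comp (continuous_apply t)).div_const _) (hPi t))
      |>.inter (isClosed_iInter fun t =>
        isClosed_le ((hws.comp (continuous_apply t)).div_const _) (hW (t + 1)))
  obtain ⟨x, hx, hmax⟩ := hclosed.isCompact.exists_isMaxOn
    ⟨fun _ => (⟨0, left_mem_Icc.2 zero_le_one⟩, ⟨0, left_mem_Icc.2 hK0⟩),
      implementable_zero hδ0.le hδ1⟩ (hPi 0).continuousOn
  refine ⟨sOf x, pOf x, hx, fun s p h => ?_⟩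
  exact hmax (show (fun t => (⟨s t, h.1.1 t⟩, ⟨p t, h.2.2.1 t, hK s p h t⟩)) ∈ _ from h)

lemma exists_optimal_ne_zero_iff (hδ0 : 0 < δ) (hδ1 : δ < 1) (hπ : ContinuousOn π (Icc 0 1))
    (hw : ContinuousOn w (Icc 0 1)) (hπm : MonotoneOn π (Icc 0 1))
    (hwa : StrictAntiOn w (Icc 0 1)) (hu : StrictMonoOn (fun x => π x + w x) (Icc 0 1)) :
    (∃ s p : ℕ → ℝ, Optimal δ π w s p ∧ ∃ t, s t ≠ 0) ↔
      ∃ x ∈ Ioc (0 : ℝ) 1, w 0 - w x < δ * (π x - π 0) := by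
  refine ⟨fun ⟨s, p, h, hne⟩ => h.1.exists_gain hδ0 hδ1 hπ hw hu hne, fun ⟨x, hx, hgain⟩ => ?_⟩
  obtain ⟨s, p, h, hne⟩ := exists_implementable_ne_zero hδ0 hδ1 hπ hπm hwa hx hgain
  obtain ⟨s', p', h'⟩ := exists_optimal hδ0 hδ1 hπ hw
  by_cases hne' : ∃ t, s' t ≠ 0
  · exact ⟨s', p', h', hne'⟩
  simp only [not_exists, not_not] at hne'
  -- a trivial optimum is worth at most `π 0 / (1 - δ)`, which (P-IC) at `0` guarantees to `(s, p)`
  have hle : PiVal δ π s' p' 0 ≤ π 0 / (1 - δ) := by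
    rw [← tsum_geom_mul_const hδ0.le hδ1]
    refine Summable.tsum_le_tsum (fun k => mul_le_mul_of_nonneg_left ?_ (pow_nonneg hδ0.le k))
      (h'.1.1.summable_piVal hδ0 hδ1 hπ 0)
      (summable_geom_mul_of_abs_le hδ0.le hδ1 fun _ => le_rfl)
    rw [hne']
    linarith [h'.1.2.2.1 (0 + k)]
  have hge : π 0 / (1 - δ) ≤ PiVal δ π s p 0 := h.1.2.1 ▸ h.2.2.2.1 0
  exact ⟨s, p, ⟨h, fun s'' p'' h'' => (h'.2 s'' p'' h'').trans (hle.trans hge)⟩, hne⟩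

end Existence

section Thresholds

variable {δ : ℝ} {π w : ℝ → ℝ}

noncomputable def lowThreshold (π w : ℝ → ℝ) : ℝ :=
  sInf ((fun x => (w 0 - w x) / (π x - π 0)) '' Ioc 0 1)

noncomputable def highThreshold (π w : ℝ → ℝ) : ℝ :=
  sSup ((fun y => (w y - w 1) / (π 1 - π y)) '' Ico 0 1)

lemma lowThreshold_lt_iff (hπm : StrictMonoOn π (Icc 0 1)) (hwa : StrictAntiOn w (Icc 0 1)) :
    lowThreshold π w < δ ↔ ∃ x ∈ Ioc (0 : ℝ) 1, w 0 - w x < δ * (π x - π 0) := by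
  have h0 : (0 : ℝ) ∈ Icc (0 : ℝ) 1 := left_mem_Icc.2 zero_le_one
  exact csInf_image_div_lt_iff ⟨1, right_mem_Ioc.2 zero_lt_one⟩
    (fun x hx => sub_nonneg.2 (hwa.antitoneOn h0 (Ioc_subset_Icc_self hx) hx.1.le))
    (fun x hx => sub_pos.2 (hπm h0 (Ioc_subset_Icc_self hx) hx.1))

lemma w_sub_w_one_le (hu : StrictMonoOn (fun x => π x + w x) (Icc 0 1)) {y : ℝ}
    (hy : y ∈ Ico (0 : ℝ) 1) : w y - w 1 ≤ π 1 - π y := by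
  have := hu (Ico_subset_Icc_self hy) (right_mem_Icc.2 zero_le_one) hy.2
  dsimp only at this
  linarith

lemma π_one_sub_pos (hπm : StrictMonoOn π (Icc 0 1)) {y : ℝ} (hy : y ∈ Ico (0 : ℝ) 1) :
    0 < π 1 - π y :=
  sub_pos.2 (hπm (Ico_subset_Icc_self hy) (right_mem_Icc.2 zero_le_one) hy.2)

lemma lt_highThreshold_iff (hπm : StrictMonoOn π (Icc 0 1))
    (hu : StrictMonoOn (fun x => π x + w x) (Icc 0 1)) :
    δ < highThreshold π w ↔ ∃ y ∈ Ico (0 : ℝ) 1, δ * (π 1 - π y) < w y - w 1 :=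
  lt_csSup_image_div_iff ⟨0, left_mem_Ico.2 zero_lt_one⟩
    (fun _ => w_sub_w_one_le hu) (fun _ => π_one_sub_pos hπm)

lemma lowThreshold_nonneg (hπm : StrictMonoOn π (Icc 0 1)) (hwa : StrictAntiOn w (Icc 0 1)) :
    0 ≤ lowThreshold π w := by
  refine not_lt.1 fun h => ?_
  obtain ⟨x, hx, hlt⟩ := (lowThreshold_lt_iff hπm hwa).1 h
  have := hwa (left_mem_Icc.2 zero_le_one) (Ioc_subset_Icc_self hx) hx.1
  linarith

lemma lowThreshold_le_highThreshold (hπm : StrictMonoOn π (Icc 0 1))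
    (hwa : StrictAntiOn w (Icc 0 1)) (hu : StrictMonoOn (fun x => π x + w x) (Icc 0 1)) :
    lowThreshold π w ≤ highThreshold π w :=
  le_of_forall_gt fun _ h => (lowThreshold_lt_iff hπm hwa).2 ⟨1, right_mem_Ioc.2 zero_lt_one,
    lt_mul_of_csSup_image_div_lt (fun _ => w_sub_w_one_le hu)
      (fun _ => π_one_sub_pos hπm) h (left_mem_Ico.2 zero_lt_one)⟩

lemma highThreshold_le_one (hπm : StrictMonoOn π (Icc 0 1))
    (hu : StrictMonoOn (fun x => π x + w x) (Icc 0 1)) : highThreshold π w ≤ 1 := by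
  refine not_lt.1 fun h => ?_
  obtain ⟨y, hy, hlt⟩ := (lt_highThreshold_iff hπm hu).1 h
  linarith [w_sub_w_one_le hu hy]

lemma lt_one_of_mem_maxSet (hπm : StrictMonoOn π (Icc 0 1))
    (hu : StrictMonoOn (fun x => π x + w x) (Icc 0 1)) (h : δ < highThreshold π w) {x : ℝ}
    (hx : x ∈ MaxSet δ π w) : x < 1 := by
  obtain ⟨y, hy, hlt⟩ := (lt_highThreshold_iff hπm hu).1 h
  refine hx.1.2.lt_of_ne ?_
  rintro rfl
  linarith [hx.2 y (Ico_subset_Icc_self hy)]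

lemma eq_one_of_mem_maxSet (hπm : StrictMonoOn π (Icc 0 1))
    (hu : StrictMonoOn (fun x => π x + w x) (Icc 0 1)) (h : highThreshold π w < δ) {x : ℝ}
    (hx : x ∈ MaxSet δ π w) : x = 1 := by
  by_contra hne
  have hx1 : x ∈ Ico (0 : ℝ) 1 := ⟨hx.1.1, hx.1.2.lt_of_ne hne⟩
  have := lt_mul_of_csSup_image_div_lt (fun _ => w_sub_w_one_le hu)
    (fun _ => π_one_sub_pos hπm) h hx1
  linarith [hx.2 1 (right_mem_Icc.2 zero_le_one)]

end Thresholds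

/-- Discount-factor thresholds for nontrivial contracts and full transfer. -/
theorem discount_thresholds
    (π w : ℝ → ℝ)
    (hπc : ContinuousOn π (Set.Icc 0 1)) (hwc : ContinuousOn w (Set.Icc 0 1))
    (hπm : StrictMonoOn π (Set.Icc 0 1)) (hwa : StrictAntiOn w (Set.Icc 0 1))
    (hGm : StrictMonoOn (fun x => π x + w x) (Set.Icc 0 1)) :
    ∃ δlow δhigh : ℝ, 0 ≤ δlow ∧ δlow ≤ δhigh ∧ δhigh ≤ 1 ∧
      ∀ δ ∈ Set.Ioo (0 : ℝ) 1,
        ((∃ s p : ℕ → ℝ, Optimal δ π w s p ∧ ∃ t, s t ≠ 0) ↔ δlow < δ) ∧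
        (∀ sbar : ℝ, IsLeast (MaxSet δ π w) sbar →
          (δ < δhigh → sbar < 1) ∧ (δhigh < δ → sbar = 1)) := by
  refine ⟨lowThreshold π w, highThreshold π w, lowThreshold_nonneg hπm hwa,
    lowThreshold_le_highThreshold hπm hwa hGm, highThreshold_le_one hπm hGm,
    fun δ ⟨hδ0, hδ1⟩ => ⟨?_, fun sbar hsbar =>
      ⟨fun h => lt_one_of_mem_maxSet hπm hGm h hsbar.1,
        fun h => eq_one_of_mem_maxSet hπm hGm h hsbar.1⟩⟩⟩
  rw [exists_optimal_ne_zero_iff hδ0 hδ1 hπc hwc hπm.monotoneOn hwa hGm,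
    lowThreshold_lt_iff hπm hwa]
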